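/- For an integer q ≥ 1 define G_q(t) = ∫_{−1}^{1} e^{tu} (1 − u²)^{(q−2)/2} du. Then for every t > 0, the derivative satisfies 0 < G_q'(t) ≤ (t/q) G_q(t); in particular G_q is strictly increasing on (0, ∞). -/

import Mathlib

/-!
Write `w_a(u) = (1 - u²)^a`, so that `G_q` is the exponential moment of `w_a` for
`a = (q - 2)/2 > -1`. Differentiating under the integral sign gives `G_q'(t) = ∫ u e^{tu} w_a`.
Since `w_{a+1}` vanishes at `±1` and `w_{a+1}' = -2(a+1) u w_a = -q u w_a`, integrating
`(e^{tu} w_{a+1})'` over `[-1, 1]` gives `G_q'(t) = (t/q) ∫ e^{tu} w_{a+1}`. This is positive, and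
at most `(t/q) G_q(t)` because `w_{a+1} ≤ w_a` on `[-1, 1]`.
-/

open MeasureTheory Real

noncomputable section

/-- `G_q(t) = ∫_{−1}^{1} e^{tu} (1 − u²)^{(q−2)/2} du`. -/
def Gq (q : ℕ) (t : ℝ) : ℝ :=
  ∫ u in Set.Icc (-1 : ℝ) 1, Real.exp (t * u) * (1 - u ^ 2) ^ (((q : ℝ) - 2) / 2)

open Set

lemma integrableOn_one_sub_sq_rpow {a : ℝ} (ha : -1 < a) :
    IntegrableOn (fun u : ℝ => (1 - u ^ 2) ^ a) (Icc (-1) 1) := by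
  have hfactor : EqOn (fun u : ℝ => (1 - u) ^ a * (1 + u) ^ a) (fun u => (1 - u ^ 2) ^ a)
      (Icc (-1) 1) := fun u hu => by
    dsimp only
    rw [← mul_rpow (by linarith [hu.2]) (by linarith [hu.1])]
    ring_nf
  -- near each endpoint only one factor of `(1 - u) ^ a * (1 + u) ^ a` is singular
  have hsing_right : IntervalIntegrable (fun u : ℝ => (1 - u) ^ a) volume 0 1 := by
    simpa using
      (intervalIntegral.intervalIntegrable_rpow' ha (a := 1) (b := 0)).comp_sub_left 1
  have hsing_left : IntervalIntegrable (fun u : ℝ => (1 + u) ^ a) volume (-1) 0 := by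
    simpa [add_comm] using
      (intervalIntegral.intervalIntegrable_rpow' ha (a := 0) (b := 1)).comp_add_right 1
  have hright : IntegrableOn (fun u : ℝ => (1 - u ^ 2) ^ a) (Icc 0 1) := by
    refine (((intervalIntegrable_iff_integrableOn_Icc_of_le zero_le_one).1
      hsing_right).mul_continuousOn ?_ isCompact_Icc).congr_fun
      (hfactor.mono (Icc_subset_Icc_left (by norm_num))) measurableSet_Icc
    exact (continuous_const_add (1 : ℝ)).continuousOn.rpow_const
      fun u hu => Or.inl (by linarith [hu.1])
  have hleft : IntegrableOn (fun u : ℝ => (1 - u ^ 2) ^ a) (Icc (-1) 0) := by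
    refine (((intervalIntegrable_iff_integrableOn_Icc_of_le (by norm_num)).1
      hsing_left).continuousOn_mul ?_ isCompact_Icc).congr_fun
      (hfactor.mono (Icc_subset_Icc_right zero_le_one)) measurableSet_Icc
    exact (continuous_sub_left (1 : ℝ)).continuousOn.rpow_const
      fun u hu => Or.inl (by linarith [hu.2])
  rw [← Icc_union_Icc_eq_Icc (by norm_num : (-1 : ℝ) ≤ 0) zero_le_one]
  exact hleft.union hright

lemma hasDerivAt_setIntegral_exp_mul {w : ℝ → ℝ} (hw : IntegrableOn w (Icc (-1) 1))
    (t : ℝ) :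
    HasDerivAt (fun s => ∫ u in Icc (-1 : ℝ) 1, exp (s * u) * w u)
      (∫ u in Icc (-1 : ℝ) 1, u * exp (t * u) * w u) t := by
  have hbound : ∀ u ∈ Icc (-1 : ℝ) 1, ∀ x ∈ Metric.ball t 1,
      ‖u * exp (x * u) * w u‖ ≤ exp (|t| + 1) * ‖w u‖ := by
    intro u hu x hx
    have hu' : |u| ≤ 1 := abs_le.2 hu
    have hx' : |x| ≤ |t| + 1 := by
      have := abs_sub_abs_le_abs_sub x t
      rw [Metric.mem_ball, Real.dist_eq] at hx
      linarith
    have hxu : x * u ≤ |t| + 1 := calc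
      x * u ≤ |x| * |u| := (le_abs_self _).trans (abs_mul x u).le
      _ ≤ |t| + 1 := by nlinarith [abs_nonneg x, abs_nonneg u]
    rw [norm_mul, norm_mul, Real.norm_of_nonneg (exp_pos _).le, Real.norm_eq_abs]
    gcongr
    calc |u| * exp (x * u) ≤ 1 * exp (|t| + 1) := by gcongr
      _ = exp (|t| + 1) := one_mul _
  refine (hasDerivAt_integral_of_dominated_loc_of_deriv_le (F := fun s u => exp (s * u) * w u)
    (F' := fun s u => u * exp (s * u) * w u) (Metric.ball_mem_nhds t one_pos)
    (Filter.Eventually.of_forall fun x => ?_) (hw.continuousOn_mul (by fun_prop) isCompact_Icc)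
    ?_ ((ae_restrict_iff' measurableSet_Icc).2 (Filter.Eventually.of_forall hbound))
    (hw.norm.const_mul _) (Filter.Eventually.of_forall fun u x _ => ?_)).2
  · exact (by fun_prop : Continuous fun u => exp (x * u)).aestronglyMeasurable.mul
      hw.aestronglyMeasurable
  · exact (by fun_prop : Continuous fun u => u * exp (t * u)).aestronglyMeasurable.mul
      hw.aestronglyMeasurable
  · exact ((hasDerivAt_mul_const u).exp.mul_const (w u)).congr_deriv (by ring)

def expWeightIntegral (a t : ℝ) : ℝ :=
  ∫ u in Icc (-1 : ℝ) 1, exp (t * u) * (1 - u ^ 2) ^ a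

lemma integrableOn_exp_mul_one_sub_sq_rpow {a : ℝ} (ha : -1 < a) (t : ℝ) :
    IntegrableOn (fun u : ℝ => exp (t * u) * (1 - u ^ 2) ^ a) (Icc (-1) 1) :=
  (integrableOn_one_sub_sq_rpow ha).continuousOn_mul (by fun_prop) isCompact_Icc

lemma mul_expWeightIntegral_add_one {a : ℝ} (ha : -1 < a) (t : ℝ) :
    t * expWeightIntegral (a + 1) t =
      2 * (a + 1) * ∫ u in Icc (-1 : ℝ) 1, u * exp (t * u) * (1 - u ^ 2) ^ a := by
  set g : ℝ → ℝ := fun u => exp (t * u) * (1 - u ^ 2) ^ (a + 1)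
  have hmoment : IntegrableOn (fun u : ℝ => u * exp (t * u) * (1 - u ^ 2) ^ a) (Icc (-1) 1) :=
    (integrableOn_one_sub_sq_rpow ha).continuousOn_mul (by fun_prop) isCompact_Icc
  have hg_cont : Continuous g := (by fun_prop : Continuous fun u : ℝ => exp (t * u)).mul
    ((by fun_prop : Continuous fun u : ℝ => 1 - u ^ 2).rpow_const fun _ => Or.inr (by linarith))
  have hg_deriv : ∀ u ∈ Ioo (-1 : ℝ) 1, HasDerivAt g
      (t * (exp (t * u) * (1 - u ^ 2) ^ (a + 1))
        - 2 * (a + 1) * (u * exp (t * u) * (1 - u ^ 2) ^ a)) u := by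
    intro u hu
    have hpos : 0 < 1 - u ^ 2 := by nlinarith [hu.1, hu.2]
    have hprod := ((hasDerivAt_id u).const_mul t).exp.mul
      (((hasDerivAt_pow 2 u).const_sub 1).rpow_const (p := a + 1) (Or.inl hpos.ne'))
    refine hprod.congr_deriv ?_
    rw [add_sub_cancel_right]
    simp only [id, mul_one, Nat.cast_ofNat]
    rw [rpow_add hpos, rpow_one]
    ring
  have hg_end : g 1 = 0 ∧ g (-1) = 0 := by
    simp [g, zero_rpow (by linarith : a + 1 ≠ 0)]
  have hweight := integrableOn_exp_mul_one_sub_sq_rpow (a := a + 1) (by linarith) t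
  have hftc := intervalIntegral.integral_eq_sub_of_hasDeriv_right_of_le (by norm_num)
    hg_cont.continuousOn (fun u hu => (hg_deriv u hu).hasDerivWithinAt)
    ((intervalIntegrable_iff_integrableOn_Icc_of_le (by norm_num)).2
      ((hweight.const_mul t).sub (hmoment.const_mul _)))
  rw [hg_end.1, hg_end.2, intervalIntegral.integral_of_le (by norm_num),
    ← integral_Icc_eq_integral_Ioc, integral_sub (hweight.const_mul t) (hmoment.const_mul _),
    integral_const_mul, integral_const_mul] at hftc
  rw [expWeightIntegral]
  linarith

lemma hasDerivAt_expWeightIntegral {a : ℝ} (ha : -1 < a) (t : ℝ) :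
    HasDerivAt (expWeightIntegral a) (t / (2 * (a + 1)) * expWeightIntegral (a + 1) t) t := by
  refine (hasDerivAt_setIntegral_exp_mul (integrableOn_one_sub_sq_rpow ha) t).congr_deriv ?_
  rw [div_mul_eq_mul_div, mul_expWeightIntegral_add_one ha, mul_div_cancel_left₀]
  linarith

lemma expWeightIntegral_pos {a : ℝ} (ha : -1 < a) (t : ℝ) : 0 < expWeightIntegral a t := by
  rw [expWeightIntegral, integral_Icc_eq_integral_Ioc,
    ← intervalIntegral.integral_of_le (by norm_num)]
  refine intervalIntegral.intervalIntegral_pos_of_pos_on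
    ((intervalIntegrable_iff_integrableOn_Icc_of_le (by norm_num)).2
      (integrableOn_exp_mul_one_sub_sq_rpow ha t)) (fun u hu => ?_) (by norm_num)
  exact mul_pos (exp_pos _) (rpow_pos_of_pos (by nlinarith [hu.1, hu.2]) _)

lemma expWeightIntegral_le_of_le {a b : ℝ} (ha : -1 < a) (hab : a ≤ b) (t : ℝ) :
    expWeightIntegral b t ≤ expWeightIntegral a t := by
  rw [expWeightIntegral, expWeightIntegral, integral_Icc_eq_integral_Ioo,
    integral_Icc_eq_integral_Ioo]
  refine setIntegral_mono_on
    ((integrableOn_exp_mul_one_sub_sq_rpow (ha.trans_le hab) t).mono_set Ioo_subset_Icc_self)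
    ((integrableOn_exp_mul_one_sub_sq_rpow ha t).mono_set Ioo_subset_Icc_self)
    measurableSet_Ioo fun u hu => ?_
  have hpos : 0 < 1 - u ^ 2 := by nlinarith [hu.1, hu.2]
  exact mul_le_mul_of_nonneg_left
    (rpow_le_rpow_of_exponent_ge hpos (by nlinarith) hab) (exp_pos _).le

/-- For an integer `q ≥ 1`, for every `t > 0` the derivative of
`G_q` satisfies `0 < G_q'(t) ≤ (t/q) G_q(t)`; in particular `G_q` is strictly
increasing on `(0, ∞)`. -/
theorem stmt16 (q : ℕ) (hq : 1 ≤ q) :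
    (∀ t : ℝ, 0 < t →
      0 < deriv (Gq q) t ∧ deriv (Gq q) t ≤ t / q * Gq q t) ∧
    StrictMonoOn (Gq q) (Set.Ioi 0) := by
  set a : ℝ := ((q : ℝ) - 2) / 2
  have hq' : (1 : ℝ) ≤ q := by exact_mod_cast hq
  have ha : -1 < a := by simp only [a]; linarith
  have hq_eq : (q : ℝ) = 2 * (a + 1) := by simp only [a]; ring
  have hderiv (t : ℝ) : HasDerivAt (Gq q) (t / q * expWeightIntegral (a + 1) t) t := by
    rw [hq_eq]
    exact hasDerivAt_expWeightIntegral ha t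
  have hbounds (t : ℝ) (ht : 0 < t) :
      0 < deriv (Gq q) t ∧ deriv (Gq q) t ≤ t / q * Gq q t := by
    rw [(hderiv t).deriv]
    have hfactor : 0 < t / q := by positivity
    exact ⟨mul_pos hfactor (expWeightIntegral_pos (by linarith) t),
      mul_le_mul_of_nonneg_left (expWeightIntegral_le_of_le ha (by linarith) t) hfactor.le⟩
  refine ⟨hbounds, strictMonoOn_of_deriv_pos (convex_Ioi 0)
    (fun t _ => (hderiv t).continuousAt.continuousWithinAt) fun t ht => ?_⟩
  rw [interior_Ioi] at ht
  exact (hbounds t ht).1
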